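/- Let E be a Hilbert C*-module over a unital C*-algebra A, and let T, S be bounded adjointable self-adjoint operators on E. For x ∈ E with ⟨x,x⟩ = 1, Δ_x(T)·Δ_x(S) ≥ (1/2)√‖(⟨{T,S}x,x⟩ − {⟨Tx,x⟩,⟨Sx,x⟩})² − (⟨[T,S]x,x⟩ + [⟨Tx,x⟩,⟨Sx,x⟩])²‖ (noncommutative Heisenberg–Robertson–Schrödinger uncertainty principle, norm form). -/

import Mathlib

open scoped RightActions

/-- The Hilbert C⋆-module class as it stood in Mathlib of December 2024 (right `A`-action
through `Aᵐᵒᵖ`); Mathlib's `CStarModule` now uses a left action `SMul A E`. -/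
class CStarModuleRight (A E : Type*) [NonUnitalSemiring A] [StarRing A] [Module ℂ A]
    [AddCommGroup E] [Module ℂ E] [PartialOrder A] [SMul Aᵐᵒᵖ E] [Norm A] [Norm E]
    extends Inner A E where
  inner_add_right {x} {y} {z} : inner x (y + z) = inner x y + inner x z
  inner_self_nonneg {x} : 0 ≤ inner x x
  inner_self {x} : inner x x = 0 ↔ x = 0
  inner_op_smul_right {a : A} {x y : E} : inner x (y <• a) = inner x y * a
  inner_smul_right_complex {z : ℂ} {x} {y} : inner x (z • y) = z • inner x y
  star_inner x y : star (inner x y) = inner y x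
  norm_eq_sqrt_norm_inner_self x : ‖x‖ = Real.sqrt ‖inner x x‖

variable {A E : Type*} [CStarAlgebra A] [PartialOrder A] [StarOrderedRing A]
  [AddCommGroup E] [Module ℂ E] [SMul Aᵐᵒᵖ E] [Norm E] [CStarModuleRight A E]

local notation "⟪" x ", " y "⟫" => (inner A x y : A)

/-! With `t = ⟪T x, x⟫` and `s = ⟪S x, x⟫`, self-adjointness turns the anticommutator and
commutator terms into `c⋆ + c` and `c⋆ - c` for the covariance `c = ⟪T x, S x⟫ - t s`, so the
element under the root is `2 (c⋆ c + c c⋆)`, of norm at most `4 ‖c‖²`. As `x` is a unit vector,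
`c = ⟪T x - x t, S x - x s⟫`, and the Cauchy–Schwarz inequality for Hilbert C⋆-modules bounds
`‖c‖` by `Δ_x(T) Δ_x(S)`. -/

namespace CStarModuleRight

section Algebra

omit [StarOrderedRing A]

@[simp]
lemma inner_add_left {x y z : E} : ⟪x + y, z⟫ = ⟪x, z⟫ + ⟪y, z⟫ := by
  rw [← star_inner, inner_add_right, star_add, star_inner, star_inner]

def innerRight (x : E) : E →+ A :=
  AddMonoidHom.mk' (fun y => ⟪x, y⟫) fun _ _ => inner_add_right

@[simp]
lemma inner_zero_right {x : E} : ⟪x, (0 : E)⟫ = 0 := map_zero (innerRight x)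

@[simp]
lemma inner_sub_right {x y z : E} : ⟪x, y - z⟫ = ⟪x, y⟫ - ⟪x, z⟫ := map_sub (innerRight x) y z

@[simp]
lemma inner_sub_left {x y z : E} : ⟪x - y, z⟫ = ⟪x, z⟫ - ⟪y, z⟫ := by
  rw [← star_inner, inner_sub_right, star_sub, star_inner, star_inner]

@[simp]
lemma inner_op_smul_left {a : A} {x y : E} : ⟪x <• a, y⟫ = star a * ⟪x, y⟫ := by
  rw [← star_inner, inner_op_smul_right, star_mul, star_inner]

@[simp]
lemma inner_smul_right_real {r : ℝ} {x y : E} : ⟪x, r • y⟫ = r • ⟪x, y⟫ := by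
  rw [← Complex.coe_smul, inner_smul_right_complex, Complex.coe_smul]

@[simp]
lemma inner_smul_left_real {r : ℝ} {x y : E} : ⟪r • x, y⟫ = r • ⟪x, y⟫ := by
  rw [← star_inner, inner_smul_right_real, star_smul, star_trivial, star_inner]

lemma norm_sq_eq (x : E) : ‖x‖ ^ 2 = ‖⟪x, x⟫‖ := by
  rw [norm_eq_sqrt_norm_inner_self (A := A), Real.sq_sqrt (norm_nonneg _)]

include A in
protected lemma norm_nonneg (x : E) : 0 ≤ ‖x‖ := by
  rw [norm_eq_sqrt_norm_inner_self (A := A)]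
  exact Real.sqrt_nonneg _

include A in
protected lemma norm_pos {x : E} (hx : x ≠ 0) : 0 < ‖x‖ := by
  rw [norm_eq_sqrt_norm_inner_self (A := A), Real.sqrt_pos, norm_pos_iff]
  exact fun h => hx (inner_self.mp h)

end Algebra

lemma inner_mul_inner_swap_le (x y : E) : ⟪y, x⟫ * ⟪x, y⟫ ≤ ‖x‖ ^ 2 • ⟪y, y⟫ := by
  rcases eq_or_ne x 0 with rfl | hx
  · simpa using smul_nonneg (sq_nonneg _) inner_self_nonneg
  set a := ⟪x, y⟫
  rw [← star_inner x y]
  have hconj : star a * ⟪x, x⟫ * a ≤ ‖x‖ ^ 2 • (star a * a) := by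
    rw [norm_sq_eq (A := A)]
    exact CStarAlgebra.star_left_conjugate_le_norm_smul (star_inner x x)
  set r := ‖x‖ ^ 2
  have hsmul : 0 ≤ r • (r • ⟪y, y⟫ - star a * a) := by
    calc (0 : A) ≤ ⟪x <• a - r • y, x <• a - r • y⟫ := inner_self_nonneg
      _ = star a * ⟪x, x⟫ * a - 2 • r • (star a * a) + r • r • ⟪y, y⟫ := by
        simp only [inner_sub_left, inner_sub_right, inner_op_smul_left, inner_op_smul_right,
          inner_smul_left_real, inner_smul_right_real, ← star_inner x y, sub_mul, smul_mul_assoc,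
          mul_assoc]
        module
      _ ≤ r • (star a * a) - 2 • r • (star a * a) + r • r • ⟪y, y⟫ := by gcongr
      _ = r • (r • ⟪y, y⟫ - star a * a) := by module
  have hr : 0 < r := pow_pos (CStarModuleRight.norm_pos (A := A) hx) 2
  exact sub_nonneg.mp (nonneg_of_smul_nonneg_of_pos_left hsmul hr)

lemma norm_inner_le (x y : E) : ‖⟪x, y⟫‖ ≤ ‖x‖ * ‖y‖ := by
  have hsq : ‖⟪x, y⟫‖ ^ 2 ≤ (‖x‖ * ‖y‖) ^ 2 := by
    calc ‖⟪x, y⟫‖ ^ 2 = ‖⟪y, x⟫ * ⟪x, y⟫‖ := by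
          rw [← star_inner x y, CStarRing.norm_star_mul_self, sq]
      _ ≤ ‖‖x‖ ^ 2 • ⟪y, y⟫‖ := by
          refine CStarAlgebra.norm_le_norm_of_nonneg_of_le ?_ (inner_mul_inner_swap_le x y)
          rw [← star_inner x y]
          exact star_mul_self_nonneg _
      _ = (‖x‖ * ‖y‖) ^ 2 := by
          rw [norm_smul, ← norm_sq_eq (A := A) y, Real.norm_of_nonneg (sq_nonneg _), mul_pow]
  have hxy : 0 ≤ ‖x‖ * ‖y‖ :=
    mul_nonneg (CStarModuleRight.norm_nonneg (A := A) x) (CStarModuleRight.norm_nonneg (A := A) y)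
  exact (pow_le_pow_iff_left₀ (norm_nonneg _) hxy two_ne_zero).mp hsq

section Covariance

omit [StarOrderedRing A]

variable (A) in
def covariance (T S : E →ₗ[ℂ] E) (x : E) : A := ⟪T x, S x⟫ - ⟪T x, x⟫ * ⟪x, S x⟫

lemma star_covariance (T S : E →ₗ[ℂ] E) (x : E) :
    star (covariance A T S x) = covariance A S T x := by
  simp only [covariance, star_sub, star_mul, star_inner]

lemma covariance_eq_inner (T S : E →ₗ[ℂ] E) {x : E} (hx : ⟪x, x⟫ = 1) :
    covariance A T S x = ⟪T x - x <• ⟪x, T x⟫, S x - x <• ⟪x, S x⟫⟫ := by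
  simp only [covariance, inner_sub_left, inner_sub_right, inner_op_smul_left, inner_op_smul_right,
    star_inner, hx]
  noncomm_ring

variable {T S : E →ₗ[ℂ] E}

lemma inner_anticommutator_sub (hT : ∀ y z : E, ⟪T y, z⟫ = ⟪y, T z⟫)
    (hS : ∀ y z : E, ⟪S y, z⟫ = ⟪y, S z⟫) (x : E) :
    ⟪T (S x) + S (T x), x⟫ - (⟪T x, x⟫ * ⟪S x, x⟫ + ⟪S x, x⟫ * ⟪T x, x⟫) =
      covariance A S T x + covariance A T S x := by
  rw [covariance, covariance, inner_add_left, hT (S x), hS (T x), ← hT x x, ← hS x x]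
  abel

lemma inner_commutator_add (hT : ∀ y z : E, ⟪T y, z⟫ = ⟪y, T z⟫)
    (hS : ∀ y z : E, ⟪S y, z⟫ = ⟪y, S z⟫) (x : E) :
    ⟪T (S x) - S (T x), x⟫ + (⟪T x, x⟫ * ⟪S x, x⟫ - ⟪S x, x⟫ * ⟪T x, x⟫) =
      covariance A S T x - covariance A T S x := by
  rw [covariance, covariance, inner_sub_left, hT (S x), hS (T x), ← hT x x, ← hS x x]
  abel

end Covariance

lemma norm_covariance_le (T S : E →ₗ[ℂ] E) {x : E} (hx : ⟪x, x⟫ = 1) :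
    ‖covariance A T S x‖ ≤ ‖T x - x <• ⟪x, T x⟫‖ * ‖S x - x <• ⟪x, S x⟫‖ :=
  covariance_eq_inner T S hx ▸ norm_inner_le _ _

end CStarModuleRight

lemma norm_add_sq_sub_sub_sq_le {R : Type*} [NormedRing R] (a b : R) :
    ‖(a + b) ^ 2 - (a - b) ^ 2‖ ≤ 4 * (‖a‖ * ‖b‖) := by
  have hid : (a + b) ^ 2 - (a - b) ^ 2 = (a * b + b * a) + (a * b + b * a) := by noncomm_ring
  have hab : ‖a * b + b * a‖ ≤ 2 * (‖a‖ * ‖b‖) := by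
    calc ‖a * b + b * a‖ ≤ ‖a‖ * ‖b‖ + ‖b‖ * ‖a‖ :=
          (norm_add_le _ _).trans (add_le_add (norm_mul_le _ _) (norm_mul_le _ _))
      _ = 2 * (‖a‖ * ‖b‖) := by ring
  rw [hid]
  linarith [norm_add_le (a * b + b * a) (a * b + b * a)]

lemma half_sqrt_norm_star_add_sq_sub_star_sub_sq_le {R : Type*} [NormedRing R] [StarRing R]
    [NormedStarGroup R] (p : R) :
    (1 / 2 : ℝ) * √‖(star p + p) ^ 2 - (star p - p) ^ 2‖ ≤ ‖p‖ := by
  have h := norm_add_sq_sub_sub_sq_le (star p) p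
  rw [norm_star] at h
  have hsqrt : √‖(star p + p) ^ 2 - (star p - p) ^ 2‖ ≤ 2 * ‖p‖ :=
    Real.sqrt_le_iff.mpr ⟨by positivity, by linarith⟩
  linarith

theorem noncommutative_HRS_norm_general
(T S : E →ₗ[ℂ] E)
    (hT : ∀ y z : E, ⟪T y, z⟫ = ⟪y, T z⟫) (hS : ∀ y z : E, ⟪S y, z⟫ = ⟪y, S z⟫)
    (x : E) (hx : ⟪x, x⟫ = 1) :
    (1 / 2 : ℝ) * Real.sqrt
      ‖(⟪T (S x) + S (T x), x⟫ - (⟪T x, x⟫ * ⟪S x, x⟫ + ⟪S x, x⟫ * ⟪T x, x⟫)) ^ 2 -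
        (⟪T (S x) - S (T x), x⟫ + (⟪T x, x⟫ * ⟪S x, x⟫ - ⟪S x, x⟫ * ⟪T x, x⟫)) ^ 2‖ ≤
      ‖T x - x <• ⟪T x, x⟫‖ * ‖S x - x <• ⟪S x, x⟫‖ := by
  open CStarModuleRight in
  have hTx : ⟪x, T x⟫ = ⟪T x, x⟫ := (hT x x).symm
  have hSx : ⟪x, S x⟫ = ⟪S x, x⟫ := (hS x x).symm
  rw [inner_anticommutator_sub hT hS, inner_commutator_add hT hS, ← star_covariance T S x]
  calc _ ≤ ‖covariance A T S x‖ := half_sqrt_norm_star_add_sq_sub_star_sub_sq_le _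
    _ ≤ _ := by
      rw [← hTx, ← hSx]
      exact norm_covariance_le T S hx

/-- Noncommutative Heisenberg–Robertson–Schrödinger uncertainty principle, norm form. -/
theorem noncommutative_HRS_norm
(T S : E →ₗ[ℂ] E)
    (hTA : ∀ (a : A) (y : E), T (y <• a) = T y <• a)
    (hSA : ∀ (a : A) (y : E), S (y <• a) = S y <• a)
    (hT : ∀ y z : E, ⟪T y, z⟫ = ⟪y, T z⟫) (hS : ∀ y z : E, ⟪S y, z⟫ = ⟪y, S z⟫)
    (hTb : ∃ C : ℝ, ∀ y : E, ‖T y‖ ≤ C * ‖y‖) (hSb : ∃ C : ℝ, ∀ y : E, ‖S y‖ ≤ C * ‖y‖)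
    (x : E) (hx : ⟪x, x⟫ = 1) :
    (1 / 2 : ℝ) * Real.sqrt
      ‖(⟪T (S x) + S (T x), x⟫ - (⟪T x, x⟫ * ⟪S x, x⟫ + ⟪S x, x⟫ * ⟪T x, x⟫)) ^ 2 -
        (⟪T (S x) - S (T x), x⟫ + (⟪T x, x⟫ * ⟪S x, x⟫ - ⟪S x, x⟫ * ⟪T x, x⟫)) ^ 2‖ ≤
      ‖T x - x <• ⟪T x, x⟫‖ * ‖S x - x <• ⟪S x, x⟫‖ :=
  noncommutative_HRS_norm_general T S hT hS x hx
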